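/- Assume n is odd, ω₀ is an integer with ω₀ > −(n−1)/2, σ = 0, γ̃ = n + ω₀ − 1, and μ : (−r₀', r₀') → ℝ is a smooth even function (some 0 < r₀' ≤ −r₀) with μ(0) = 0 and μ(r) = μ̃(log(−r)) for −r₀' < r < 0. Then there exist ε > 0 and a smooth even function g : (−ε, ε) → ℝ such that g(r) = G(r) for all r ∈ (−ε, 0). (This expresses that the joint branes N ∪ N̂, obtained by reflecting the brane across the black-hole/white-hole singularity r = 0, form a C^∞ hypersurface in ℝ² × S₀.) -/
import Mathlib



/-- **Smooth transition through the singularity, case `γ = n + ω₀ - 1`, `σ = 0`.**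
If `n` is odd, `ω₀` is an integer with `ω₀ > -(n-1)/2`, `σ = 0`, `γ = n + ω₀ - 1`,
and `μ` is a smooth even extension of `μ̃(log(-r))`, then `G = dt/dr` extends to a
smooth even function near `r = 0`, i.e. the joint branes `N ∪ N̂` form a `C^∞`
hypersurface in `ℝ² × S₀`. -/
theorem smooth_transition_noncritical_int
    (n : ℕ) (hn : 3 ≤ n)
    (m Λ κt κ σ ω₀ ρ₀ γ r₀ : ℝ)
    (hm : 0 < m) (hΛ : Λ ≤ 0)
    (hκt : κt = -1 ∨ κt = 0 ∨ κt = 1) (hΛκt : Λ = 0 → κt = 1)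
    (hκ : κ ≠ 0) (hρ₀ : 0 < ρ₀) (hγ0 : 0 < γ) (hr₀ : r₀ < 0)
    (lam μt : ℝ → ℝ)
    (hlam : ContDiff ℝ (⊤ : ℕ∞) lam)
    (hlam0 : Filter.Tendsto lam Filter.atBot (nhds 0))
    (hμt : ∀ t : ℝ, HasDerivAt μt (lam t) t)
    (hμt0 : Filter.Tendsto μt Filter.atBot (nhds 0))
    (θ Φ G : ℝ → ℝ)
    (hθ : ∀ r < (0:ℝ), θ r
      = m + 2 * Λ / ((n : ℝ) * ((n : ℝ) + 1)) * (-r) ^ ((n : ℝ) + 1)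
        - κt * (-r) ^ ((n : ℝ) - 1))
    (hΦ : ∀ r < (0:ℝ), Φ r
      = m * (-r) ^ (2 * γ - ((n : ℝ) - 1))
        + 2 * Λ / ((n : ℝ) * ((n : ℝ) + 1)) * (-r) ^ (2 * γ + 2)
        - κt * (-r) ^ (2 * γ)
        + κ ^ 2 / (n : ℝ) ^ 2
          * (ρ₀ ^ 2 * (-r) ^ (2 * (γ + 1 - ((n : ℝ) + ω₀)))
               * Real.exp (-2 * μt (Real.log (-r)))
             + 2 * σ * ρ₀ * (-r) ^ (2 * γ + 2 - ((n : ℝ) + ω₀))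
               * Real.exp (-μt (Real.log (-r)))
             + σ ^ 2 * (-r) ^ (2 * γ + 2)))
    (hG : ∀ r < (0:ℝ), G r
      = -(κ / (n : ℝ))
          * (σ * (-r) ^ ((n : ℝ) + γ)
             + ρ₀ * (-r) ^ (γ - ω₀) * Real.exp (-μt (Real.log (-r))))
          / (θ r * Real.sqrt (Φ r)))
    (r₀' : ℝ) (hr₀'0 : 0 < r₀') (hr₀' : r₀' ≤ -r₀)
    (μ : ℝ → ℝ)
    (hμs : ContDiffOn ℝ (⊤ : ℕ∞) μ (Set.Ioo (-r₀') r₀'))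
    (hμeven : ∀ r ∈ Set.Ioo (-r₀') r₀', μ (-r) = μ r)
    (hμ0 : μ 0 = 0)
    (hμeq : ∀ r : ℝ, -r₀' < r → r < 0 → μ r = μt (Real.log (-r)))
    (hnodd : Odd n)
    (hω₀int : ∃ z : ℤ, ω₀ = (z : ℝ))
    (hω₀gt : -((n : ℝ) - 1) / 2 < ω₀)
    (hσ0 : σ = 0)
    (hγ : γ = (n : ℝ) + ω₀ - 1) :
    ∃ ε : ℝ, 0 < ε ∧ ∃ g : ℝ → ℝ,
      ContDiffOn ℝ (⊤ : ℕ∞) g (Set.Ioo (-ε) ε)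
      ∧ (∀ r ∈ Set.Ioo (-ε) ε, g (-r) = g r)
      ∧ ∀ r : ℝ, -ε < r → r < 0 → g r = G r := by

  classical
  obtain ⟨z, hz⟩ := hω₀int
  -- basic integer facts
  have hn3 : (3:ℝ) ≤ (n:ℝ) := by exact_mod_cast hn
  have hzR : (0:ℝ) < (n:ℝ) + 2*ω₀ - 1 := by nlinarith [hω₀gt]
  have hnz : 0 < (n:ℤ) + 2*z - 1 := by
    have : (0:ℝ) < (((n:ℤ) + 2*z - 1 : ℤ) : ℝ) := by push_cast; rw [← hz]; linarith
    exact_mod_cast this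
  have hnz2 : 0 < (n:ℤ) + z := by omega
  have hnz3 : 0 < (n:ℤ) + z - 1 := by omega
  set c : ℕ := ((n:ℤ) + 2*z - 1).toNat with hcdef
  set d : ℕ := 2 * ((n:ℤ) + z).toNat with hddef
  set e : ℕ := 2 * ((n:ℤ) + z - 1).toNat with hedef
  have hcZ : (c:ℤ) = (n:ℤ) + 2*z - 1 := Int.toNat_of_nonneg hnz.le
  have hcR : (c:ℝ) = (n:ℝ) + 2*ω₀ - 1 := by
    have := congrArg (fun x : ℤ => (x:ℝ)) hcZ
    push_cast at this; rw [hz]; exact this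
  have hdR : (d:ℝ) = 2*((n:ℝ) + ω₀) := by
    have h2 : ((((n:ℤ) + z).toNat : ℕ) : ℝ) = (n:ℝ) + (z:ℝ) := by
      exact_mod_cast congrArg (Int.cast : ℤ → ℝ) (Int.toNat_of_nonneg hnz2.le)
    rw [hddef, hz]; push_cast [h2]; ring
  have heR : (e:ℝ) = 2*((n:ℝ) + ω₀ - 1) := by
    have h2 : ((((n:ℤ) + z - 1).toNat : ℕ) : ℝ) = (n:ℝ) + (z:ℝ) - 1 := by
      exact_mod_cast congrArg (Int.cast : ℤ → ℝ) (Int.toNat_of_nonneg hnz3.le)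
    rw [hedef, hz]; push_cast [h2]; ring
  have hceven : Even c := by
    rw [← Int.even_coe_nat, hcZ]
    obtain ⟨k, hk⟩ := hnodd
    exact ⟨k + z, by push_cast [hk]; ring⟩
  have hdeven : Even d := ⟨((n:ℤ) + z).toNat, by omega⟩
  have heeven : Even e := ⟨((n:ℤ) + z - 1).toNat, by omega⟩
  have hcne : c ≠ 0 := by omega
  have hdne : d ≠ 0 := by omega
  have hene : e ≠ 0 := by omega
  have hn1even : Even (n - 1) := Nat.Odd.sub_odd hnodd odd_one
  have hp1even : Even (n + 1) := Odd.add_one hnodd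
  have hnR0 : (n:ℝ) ≠ 0 := by positivity
  -- the smooth extensions
  set A : ℝ := 2 * Λ / ((n:ℝ) * ((n:ℝ) + 1)) with hAdef
  set θh : ℝ → ℝ := fun r => m + A * r ^ (n+1) - κt * r ^ (n-1) with hθh
  set Φh : ℝ → ℝ := fun r =>
      m * r ^ c + A * r ^ d - κt * r ^ e
        + κ ^ 2 / (n:ℝ) ^ 2 * (ρ₀ ^ 2 * Real.exp (-2 * μ r)) with hΦh
  set g : ℝ → ℝ := fun r =>
      -(κ / (n:ℝ)) * (ρ₀ * r ^ (n-1) * Real.exp (-(μ r))) / (θh r * Real.sqrt (Φh r)) with hgdef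
  have h0mem : (0:ℝ) ∈ Set.Ioo (-r₀') r₀' := by constructor <;> linarith
  have hμc : ContinuousAt μ 0 :=
    (hμs.continuousOn.continuousAt (isOpen_Ioo.mem_nhds h0mem))
  have hθh0 : θh 0 = m := by simp [hθh, zero_pow (by omega : n + 1 ≠ 0), zero_pow (by omega : n - 1 ≠ 0)]
  have hΦh0 : Φh 0 = κ ^ 2 / (n:ℝ) ^ 2 * ρ₀ ^ 2 := by
    simp [hΦh, zero_pow hcne, zero_pow hdne, zero_pow hene, hμ0]
  have hΦh0pos : 0 < Φh 0 := by rw [hΦh0]; positivity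
  have hθhc : ContinuousAt θh 0 := by fun_prop
  have hΦhc : ContinuousAt Φh 0 := by
    apply ContinuousAt.add
    · fun_prop
    · exact (continuousAt_const.mul (((continuousAt_const.mul hμc)).rexp.const_mul _))
  have hev : ∀ᶠ r in nhds (0:ℝ), 0 < θh r ∧ 0 < Φh r :=
    ((hθhc.eventually (eventually_gt_nhds (by rw [hθh0]; exact hm))).and
      (hΦhc.eventually (eventually_gt_nhds hΦh0pos)))
  obtain ⟨δ, hδ0, hδ⟩ := Metric.eventually_nhds_iff.1 hev
  refine ⟨min δ r₀', lt_min hδ0 hr₀'0, g, ?_, ?_, ?_⟩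
  all_goals
    have hsub : Set.Ioo (-(min δ r₀')) (min δ r₀') ⊆ Set.Ioo (-r₀') r₀' := by
      apply Set.Ioo_subset_Ioo <;> simp [min_le_right, neg_le_neg_iff]
    have hpos : ∀ x ∈ Set.Ioo (-(min δ r₀')) (min δ r₀'), 0 < θh x ∧ 0 < Φh x := by
      intro x hx
      apply hδ
      rw [Real.dist_eq, sub_zero, abs_lt]
      constructor
      · have := hx.1; have : -(min δ r₀') ≤ -δ ∨ True := Or.inr trivial
        have := min_le_left δ r₀'; linarith [hx.1]
      · linarith [hx.2, min_le_left δ r₀']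
  · -- smoothness
    have hμS : ContDiffOn ℝ (⊤ : ℕ∞) μ _ := hμs.mono hsub
    have hθhS : ContDiffOn ℝ (⊤ : ℕ∞) θh (Set.Ioo (-(min δ r₀')) (min δ r₀')) := by
      apply ContDiffOn.sub
      · exact (contDiff_const.add (contDiff_const.mul (contDiff_id.pow _))).contDiffOn
      · exact (contDiff_const.mul (contDiff_id.pow _)).contDiffOn
    have hΦhS : ContDiffOn ℝ (⊤ : ℕ∞) Φh (Set.Ioo (-(min δ r₀')) (min δ r₀')) := by
      apply ContDiffOn.add
      · apply ContDiffOn.sub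
        · exact ((contDiff_const.mul (contDiff_id.pow _)).add (contDiff_const.mul (contDiff_id.pow _))).contDiffOn
        · exact (contDiff_const.mul (contDiff_id.pow _)).contDiffOn
      · exact contDiffOn_const.mul ((contDiffOn_const.mul ((contDiffOn_const.mul hμS).exp)))
    have hsqS : ContDiffOn ℝ (⊤ : ℕ∞) (fun r => Real.sqrt (Φh r))
        (Set.Ioo (-(min δ r₀')) (min δ r₀')) := by
      intro x hx
      exact ((Real.contDiffAt_sqrt (hpos x hx).2.ne').comp_contDiffWithinAt x (hΦhS x hx))
    have hnum : ContDiffOn ℝ (⊤ : ℕ∞)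
        (fun r => -(κ / (n:ℝ)) * (ρ₀ * r ^ (n-1) * Real.exp (-(μ r))))
        (Set.Ioo (-(min δ r₀')) (min δ r₀')) :=
      contDiffOn_const.mul ((contDiffOn_const.mul (contDiff_id.pow _).contDiffOn).mul hμS.neg.exp)
    have := hnum.div (hθhS.mul hsqS) (fun x hx => by
      have h1 := (hpos x hx).1
      have h2 := Real.sqrt_pos.2 (hpos x hx).2
      positivity)
    exact this
  · -- evenness
    intro r hr
    have hrS : -r ∈ Set.Ioo (-r₀') r₀' := by
      have := hsub hr
      constructor
      · linarith [this.2]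
      · linarith [this.1]
    have hμe : μ (-r) = μ r := hμeven r (hsub hr)
    simp only [hgdef, hθh, hΦh]
    rw [hμe, Even.neg_pow hn1even, Even.neg_pow hp1even, Even.neg_pow hceven,
      Even.neg_pow hdeven, Even.neg_pow heeven]
  · -- equality with G on the negative side
    intro r hr1 hr2
    have hrr : -r₀' < r := by linarith [min_le_right δ r₀']
    have hrS : r ∈ Set.Ioo (-(min δ r₀')) (min δ r₀') := ⟨hr1, by linarith⟩
    have hμr : μ r = μt (Real.log (-r)) := hμeq r hrr hr2
    have hep1 : (n:ℝ) + 1 = ((n+1 : ℕ) : ℝ) := by push_cast; ring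
    have hem1 : (n:ℝ) - 1 = ((n-1 : ℕ) : ℝ) := by
      have h1 : (1:ℕ) ≤ n := by omega
      push_cast [h1]; ring
    have hθr : θ r = θh r := by
      rw [hθ r hr2, hθh, hep1, hem1, Real.rpow_natCast, Real.rpow_natCast,
        Even.neg_pow hp1even, Even.neg_pow hn1even]
    have hΦr : Φ r = Φh r := by
      have e1 : 2 * γ - ((n:ℝ) - 1) = (c:ℝ) := by rw [hcR, hγ]; ring
      have e2 : 2 * γ + 2 = (d:ℝ) := by rw [hdR, hγ]; ring
      have e3 : 2 * γ = (e:ℝ) := by rw [heR, hγ]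
      have e4 : 2 * (γ + 1 - ((n:ℝ) + ω₀)) = 0 := by rw [hγ]; ring
      rw [hΦ r hr2, hΦh, e1, e2, e3, e4, Real.rpow_natCast, Real.rpow_natCast,
        Real.rpow_natCast, Real.rpow_zero, Even.neg_pow hceven, Even.neg_pow hdeven,
        Even.neg_pow heeven, hσ0, ← hμr]
      ring
    have e5 : γ - ω₀ = ((n-1 : ℕ) : ℝ) := by rw [← hem1, hγ]; ring
    rw [hG r hr2, hθr, hΦr, hσ0, e5, Real.rpow_natCast, Even.neg_pow hn1even, ← hμr]
    simp [hgdef]
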